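/- arXiv:1807.06280 — 2 statements merged into one kernel-verified Lean document; each statement's English description precedes it below -/
import Mathlib

section
/- Let S be a real m×m matrix, A a real m×n matrix, d ∈ ℝ^m, M an invertible real n×n matrix, and let Ω₁, Ω₂ be two disjoint sets with Ω₁ ∪ Ω₂ = {1,…,n}. Define J : ℝ^n → ℝ by J(f) = (1/2)‖S(d − Af)‖₂² + (1/2)Σ_{ℓ∈Ω₁}|(Mf)_ℓ| + (1/2)Σ_{ℓ∈Ω₂}(Mf)_ℓ². Then J is convex and attains its infimum on ℝ^n (the minimization problem has a solution). -/
/-!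
`J` is a sum of convex functions (`t ↦ t²`, `t ↦ |t|`) of the coordinates of affine maps of `f`,
hence convex, and it is continuous. For existence of a minimiser it suffices that `J` is coercive.
Each coordinate `y_ℓ` of `y = M f` contributes either `|y_ℓ|` or `y_ℓ² ≥ |y_ℓ| - 1`, so
`2 J f ≥ ‖M f‖_∞ - 1`, and `‖M f‖_∞ → ∞` as `f → ∞` because `M` is invertible.
-/

open Matrix Finset Filter

noncomputable def enormSq {m : ℕ} (x : Fin m → ℝ) : ℝ := ∑ i, (x i) ^ 2

theorem enormSq_nonneg {m : ℕ} (x : Fin m → ℝ) : 0 ≤ enormSq x :=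
  sum_nonneg fun i _ => sq_nonneg (x i)

section Convexity

variable {𝕜 E β ι : Type*} [Semiring 𝕜] [PartialOrder 𝕜] [AddCommMonoid E] [SMul 𝕜 E]
  [AddCommMonoid β] [PartialOrder β] [IsOrderedAddMonoid β] [Module 𝕜 β]

theorem ConvexOn.finset_sum {s : Set E} (hs : Convex 𝕜 s) (t : Finset ι) {f : ι → E → β}
    (hf : ∀ i ∈ t, ConvexOn 𝕜 s (f i)) : ConvexOn 𝕜 s (fun x => ∑ i ∈ t, f i x) := by
  induction t using Finset.cons_induction with
  | empty => simpa using convexOn_const (0 : β) hs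
  | cons i t hi ih =>
    simp only [sum_cons]
    exact (hf i (mem_cons_self i t)).add (ih fun j hj => hf j (mem_cons_of_mem hj))

end Convexity

theorem convexOn_sum_comp_affineMap_apply {E ι : Type*} [AddCommGroup E] [Module ℝ E]
    {φ : ℝ → ℝ} (hφ : ConvexOn ℝ Set.univ φ) (g : E →ᵃ[ℝ] ι → ℝ) (t : Finset ι) :
    ConvexOn ℝ Set.univ (fun x => ∑ i ∈ t, φ (g x i)) :=
  ConvexOn.finset_sum convex_univ t fun i _ => hφ.comp_affineMap ((AffineMap.proj i).comp g)

theorem convexOn_enormSq_residual {m n : ℕ} (S : Matrix (Fin m) (Fin m) ℝ)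
    (A : Matrix (Fin m) (Fin n) ℝ) (d : Fin m → ℝ) :
    ConvexOn ℝ Set.univ (fun f => enormSq (S *ᵥ (d - A *ᵥ f))) :=
  convexOn_sum_comp_affineMap_apply even_two.convexOn_pow
    (S.mulVecLin.toAffineMap.comp (AffineMap.const ℝ (Fin n → ℝ) d - A.mulVecLin.toAffineMap))
    univ

theorem convexOn_sum_abs_mulVec_apply {n : Type*} [Fintype n] (M : Matrix n n ℝ)
    (Ω : Finset n) : ConvexOn ℝ Set.univ (fun f => ∑ ℓ ∈ Ω, |(M *ᵥ f) ℓ|) :=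
  convexOn_sum_comp_affineMap_apply (convexOn_univ_norm (E := ℝ)) M.mulVecLin.toAffineMap Ω

theorem convexOn_sum_sq_mulVec_apply {n : Type*} [Fintype n] (M : Matrix n n ℝ)
    (Ω : Finset n) : ConvexOn ℝ Set.univ (fun f => ∑ ℓ ∈ Ω, (M *ᵥ f) ℓ ^ 2) :=
  convexOn_sum_comp_affineMap_apply even_two.convexOn_pow M.mulVecLin.toAffineMap Ω

section Coercivity

variable {ι : Type*} [Fintype ι] [DecidableEq ι] {Ω₁ Ω₂ : Finset ι}

theorem norm_le_sum_abs_add_sum_sq_add_one (hunion : Ω₁ ∪ Ω₂ = univ) (y : ι → ℝ) :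
    ‖y‖ ≤ ∑ ℓ ∈ Ω₁, |y ℓ| + ∑ ℓ ∈ Ω₂, y ℓ ^ 2 + 1 := by
  have h₁ : 0 ≤ ∑ ℓ ∈ Ω₁, |y ℓ| := sum_nonneg fun ℓ _ => abs_nonneg (y ℓ)
  have h₂ : 0 ≤ ∑ ℓ ∈ Ω₂, y ℓ ^ 2 := sum_nonneg fun ℓ _ => sq_nonneg (y ℓ)
  refine (pi_norm_le_iff_of_nonneg (by positivity)).2 fun ℓ => ?_
  rw [Real.norm_eq_abs]
  rcases mem_union.1 (hunion ▸ mem_univ ℓ) with hℓ | hℓ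
  · have := single_le_sum (fun i _ => abs_nonneg (y i)) hℓ
    linarith
  · have := single_le_sum (fun i _ => sq_nonneg (y i)) hℓ
    nlinarith [abs_nonneg (y ℓ), sq_abs (y ℓ)]

theorem tendsto_sum_abs_add_sum_sq_cocompact (hunion : Ω₁ ∪ Ω₂ = univ) :
    Tendsto (fun y : ι → ℝ => ∑ ℓ ∈ Ω₁, |y ℓ| + ∑ ℓ ∈ Ω₂, y ℓ ^ 2) (cocompact _) atTop :=
  tendsto_atTop_mono (fun y => by linarith [norm_le_sum_abs_add_sum_sq_add_one hunion y])
    (tendsto_atTop_add_const_right _ (-1) tendsto_norm_cocompact_atTop)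

end Coercivity

theorem Matrix.tendsto_mulVec_cocompact {𝕜 n : Type*} [NontriviallyNormedField 𝕜]
    [CompleteSpace 𝕜] [Fintype n] [DecidableEq n] {M : Matrix n n 𝕜} (hM : IsUnit M.det) :
    Tendsto (M *ᵥ ·) (cocompact _) (cocompact _) :=
  letI := M.invertibleOfIsUnitDet hM
  (M.toLinearEquiv' this).toContinuousLinearEquiv.toHomeomorph.map_cocompact.le

theorem stmt2_general (m n : ℕ) (S : Matrix (Fin m) (Fin m) ℝ) (A : Matrix (Fin m) (Fin n) ℝ)
    (d : Fin m → ℝ) (M : Matrix (Fin n) (Fin n) ℝ) (hM : IsUnit M.det)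
    (Ω₁ Ω₂ : Finset (Fin n)) (hunion : Ω₁ ∪ Ω₂ = Finset.univ)
    (J : (Fin n → ℝ) → ℝ)
    (hJ : ∀ f, J f = (1 / 2) * enormSq (S.mulVec (d - A.mulVec f))
      + (1 / 2) * ∑ ℓ ∈ Ω₁, |M.mulVec f ℓ|
      + (1 / 2) * ∑ ℓ ∈ Ω₂, (M.mulVec f ℓ) ^ 2) :
    ConvexOn ℝ Set.univ J ∧ ∃ f : Fin n → ℝ, ∀ g : Fin n → ℝ, J f ≤ J g := by
  obtain rfl := funext hJ
  have hhalf : (0 : ℝ) ≤ 1 / 2 := by norm_num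
  refine ⟨(((convexOn_enormSq_residual S A d).smul hhalf).add
    ((convexOn_sum_abs_mulVec_apply M Ω₁).smul hhalf)).add
    ((convexOn_sum_sq_mulVec_apply M Ω₂).smul hhalf), ?_⟩
  have hcont : Continuous fun f => (1 / 2) * enormSq (S.mulVec (d - A.mulVec f))
      + (1 / 2) * ∑ ℓ ∈ Ω₁, |M.mulVec f ℓ| + (1 / 2) * ∑ ℓ ∈ Ω₂, (M.mulVec f ℓ) ^ 2 := by
    unfold enormSq
    fun_prop
  have hcoercive := ((tendsto_sum_abs_add_sum_sq_cocompact hunion).comp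
    (tendsto_mulVec_cocompact hM)).const_mul_atTop one_half_pos
  refine hcont.exists_forall_le (tendsto_atTop_mono (fun f => ?_) hcoercive)
  have := enormSq_nonneg (S *ᵥ (d - A *ᵥ f))
  simp only [Function.comp_apply]
  linarith

/-- the mixed ℓ¹/ℓ² `f_d`-subproblem functional
`J f = (1/2)‖S(d − Af)‖₂² + (1/2)Σ_{ℓ∈Ω₁}|(Mf)_ℓ| + (1/2)Σ_{ℓ∈Ω₂}(Mf)_ℓ²`, with `M`
invertible and `Ω₁, Ω₂` a disjoint partition of the index set, is convex and attains its
infimum on `ℝ^n`. -/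
theorem stmt2 (m n : ℕ) (S : Matrix (Fin m) (Fin m) ℝ) (A : Matrix (Fin m) (Fin n) ℝ)
    (d : Fin m → ℝ) (M : Matrix (Fin n) (Fin n) ℝ) (hM : IsUnit M.det)
    (Ω₁ Ω₂ : Finset (Fin n)) (hdisj : Disjoint Ω₁ Ω₂) (hunion : Ω₁ ∪ Ω₂ = Finset.univ)
    (J : (Fin n → ℝ) → ℝ)
    (hJ : ∀ f, J f = (1 / 2) * enormSq (S.mulVec (d - A.mulVec f))
      + (1 / 2) * ∑ ℓ ∈ Ω₁, |M.mulVec f ℓ|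
      + (1 / 2) * ∑ ℓ ∈ Ω₂, (M.mulVec f ℓ) ^ 2) :
    ConvexOn ℝ Set.univ J ∧ ∃ f : Fin n → ℝ, ∀ g : Fin n → ℝ, J f ≤ J g :=
  stmt2_general m n S A d M hM Ω₁ Ω₂ hunion J hJ
end

section
/- Let F : ℝ^n → ℝ be a convex function with F ≥ 0, let A be a real m×n matrix, S a real m×m matrix, d ∈ ℝ^m, and N a positive integer. Let f^0 ∈ ℝ^n, p^0 = 0, and for m = 1,…,N let f^m be a global minimizer over ℝ^n of f ↦ F(f) − F(f^{m-1}) − ⟨p^{m-1}, f − f^{m-1}⟩ + (1/2)‖S(d − Af)‖₂², and set p^m = p^{m-1} − AᵀSᵀS(Af^m − d). Then for every f* ∈ ℝ^n, ‖S(d − Af^N)‖₂² ≤ (2/N)·F(f*) + ‖S(Af* − d)‖₂². -/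
/-!
Comparing `f^k` with the points of the segment towards any `u` in its defining minimization, and
letting the point tend to `f^k`, shows by convexity that `p^k` is a subgradient of `F` at `f^k`;
hence every Bregman distance `D_F^{p^k}(u, f^k)` is nonnegative. The update of `p` and Young's
inequality give `D^{p^k}(f*, f^k) + ½‖S(d - Af^k)‖² ≤ D^{p^{k-1}}(f*, f^k) + ½‖S(d - Af*)‖²`, and
`D^{p^{k-1}}(f*, f^k) = D^{p^{k-1}}(f*, f^{k-1}) - D^{p^{k-1}}(f^k, f^{k-1})` telescopes; at the
first step `p^0 = 0` and `F ≥ 0` bound the start by `F(f*)`. Comparing `f^k` with `f^{k-1}` shows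
that the residuals decrease, so `N` times the last one is at most their sum.
-/

open Matrix Finset

section EnormSq

variable {m : ℕ}

lemma enormSq_eq_dotProduct (x : Fin m → ℝ) : enormSq x = x ⬝ᵥ x := by
  simp only [enormSq, dotProduct, sq]

lemma enormSq_neg (x : Fin m → ℝ) : enormSq (-x) = enormSq x := by
  simp [enormSq]

lemma enormSq_sub_smul (x y : Fin m → ℝ) (t : ℝ) :
    enormSq (x - t • y) = enormSq x - 2 * t * (x ⬝ᵥ y) + t ^ 2 * enormSq y := by
  simp only [enormSq_eq_dotProduct, dotProduct_sub, sub_dotProduct, dotProduct_smul,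
    smul_dotProduct, smul_eq_mul, dotProduct_comm y x]
  ring

lemma dotProduct_le_half_enormSq_add (x y : Fin m → ℝ) :
    x ⬝ᵥ y ≤ 1 / 2 * enormSq x + 1 / 2 * enormSq y := by
  simp only [dotProduct, enormSq, mul_sum, ← sum_add_distrib]
  exact sum_le_sum fun i _ => by nlinarith [two_mul_le_add_sq (x i) (y i)]

end EnormSq

lemma hasLineDerivAt_of_forall_eq_quadratic {E : Type*} [AddCommGroup E] [Module ℝ E]
    {G : E → ℝ} {x v : E} {a b c : ℝ} (h : ∀ t : ℝ, G (x + t • v) = a + b * t + c * t ^ 2) :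
    HasLineDerivAt ℝ G b x v := by
  have hpoly : HasDerivAt (fun t : ℝ => a + b * t + c * t ^ 2) b 0 := by
    simpa using (((hasDerivAt_id' (0 : ℝ)).const_mul b).const_add a).fun_add
      ((hasDerivAt_pow 2 (0 : ℝ)).const_mul c)
  simpa only [HasLineDerivAt, h] using hpoly

/-- For differentiable `G` this is the optimality condition `-∇G(g) ∈ ∂F(g)`. -/
theorem ConvexOn.le_add_lineDeriv_of_isMinOn_add {E : Type*} [AddCommGroup E] [Module ℝ E]
    {s : Set E} {F G : E → ℝ} {g u : E} {ℓ : ℝ} (hF : ConvexOn ℝ s F)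
    (hmin : IsMinOn (F + G) s g) (hg : g ∈ s) (hu : u ∈ s)
    (hG : HasLineDerivAt ℝ G ℓ g (u - g)) : F g ≤ F u + ℓ := by
  have hslope : ∀ t ∈ Set.Ioc (0 : ℝ) 1,
      F g - F u ≤ t⁻¹ • (G (g + t • (u - g)) - G g) := by
    rintro t ⟨ht0, ht1⟩
    have hseg : (1 - t) • g + t • u = g + t • (u - g) := by module
    have hconv := hF.2 hg hu (sub_nonneg.2 ht1) ht0.le (sub_add_cancel 1 t)
    have hval := isMinOn_iff.1 hmin _ (hF.1 hg hu (sub_nonneg.2 ht1) ht0.le (sub_add_cancel 1 t))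
    rw [hseg] at hconv hval
    simp only [Pi.add_apply, smul_eq_mul] at hconv hval ⊢
    rw [le_inv_mul_iff₀ ht0]
    linarith
  have := ge_of_tendsto hG.tendsto_slope_zero_right
    (Filter.eventually_of_mem (Ioc_mem_nhdsGT one_pos) hslope)
  linarith

section Bregman

variable {m n : ℕ}

def bregmanDist (F : (Fin n → ℝ) → ℝ) (p u v : Fin n → ℝ) : ℝ := F u - F v - p ⬝ᵥ (u - v)

@[simp]
lemma bregmanDist_self (F : (Fin n → ℝ) → ℝ) (p u : Fin n → ℝ) : bregmanDist F p u u = 0 := by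
  simp [bregmanDist]

lemma bregmanDist_sub_bregmanDist (F : (Fin n → ℝ) → ℝ) (p u v w : Fin n → ℝ) :
    bregmanDist F p u v - bregmanDist F p w v = bregmanDist F p u w := by
  simp only [bregmanDist, dotProduct_sub]
  ring

lemma mulVec_sub_mulVec_add_smul (A : Matrix (Fin m) (Fin n) ℝ) (S : Matrix (Fin m) (Fin m) ℝ)
    (d : Fin m → ℝ) (g v : Fin n → ℝ) (t : ℝ) :
    S *ᵥ (d - A *ᵥ (g + t • v)) = S *ᵥ (d - A *ᵥ g) - t • (S *ᵥ (A *ᵥ v)) := by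
  rw [mulVec_add, mulVec_smul, sub_add_eq_sub_sub, mulVec_sub, mulVec_smul]

structure IsBregmanIteration (F : (Fin n → ℝ) → ℝ) (A : Matrix (Fin m) (Fin n) ℝ)
    (S : Matrix (Fin m) (Fin m) ℝ) (d : Fin m → ℝ) (N : ℕ) (f p : ℕ → Fin n → ℝ) : Prop where
  p_zero : p 0 = 0
  isMinOn : ∀ k < N, IsMinOn
    (fun u => bregmanDist F (p k) u (f k) + 1 / 2 * enormSq (S *ᵥ (d - A *ᵥ u))) Set.univ (f (k + 1))
  p_succ : ∀ k < N, p (k + 1) = p k - (Aᵀ * Sᵀ * S) *ᵥ (A *ᵥ f (k + 1) - d)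

namespace IsBregmanIteration

variable {F : (Fin n → ℝ) → ℝ} {A : Matrix (Fin m) (Fin n) ℝ} {S : Matrix (Fin m) (Fin m) ℝ}
  {d : Fin m → ℝ} {N k : ℕ} {f p : ℕ → Fin n → ℝ}

lemma p_succ_dotProduct (h : IsBregmanIteration F A S d N f p) (hk : k < N) (v : Fin n → ℝ) :
    p (k + 1) ⬝ᵥ v = p k ⬝ᵥ v + (S *ᵥ (d - A *ᵥ f (k + 1))) ⬝ᵥ (S *ᵥ (A *ᵥ v)) := by
  rw [h.p_succ k hk, sub_dotProduct, ← mulVec_mulVec, ← mulVec_mulVec, mulVec_transpose,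
    ← dotProduct_mulVec, mulVec_transpose, ← dotProduct_mulVec, ← neg_sub d, mulVec_neg,
    neg_dotProduct, sub_neg_eq_add]

theorem bregmanDist_nonneg (h : IsBregmanIteration F A S d N f p)
    (hF : ConvexOn ℝ Set.univ F) (hk : k < N) (u : Fin n → ℝ) :
    0 ≤ bregmanDist F (p (k + 1)) u (f (k + 1)) := by
  set G : (Fin n → ℝ) → ℝ := fun w =>
    1 / 2 * enormSq (S *ᵥ (d - A *ᵥ w)) - F (f k) - p k ⬝ᵥ (w - f k)
  have hmin : IsMinOn (F + G) Set.univ (f (k + 1)) := by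
    convert h.isMinOn k hk using 2 with w
    simp only [Pi.add_apply, G, bregmanDist]
    ring
  have hG : HasLineDerivAt ℝ G (-(p (k + 1) ⬝ᵥ (u - f (k + 1)))) (f (k + 1)) (u - f (k + 1)) := by
    refine hasLineDerivAt_of_forall_eq_quadratic (a := G (f (k + 1)))
      (c := 1 / 2 * enormSq (S *ᵥ (A *ᵥ (u - f (k + 1))))) fun t => ?_
    simp only [G, mulVec_sub_mulVec_add_smul, enormSq_sub_smul, h.p_succ_dotProduct hk,
      dotProduct_add, dotProduct_sub, dotProduct_smul, smul_eq_mul]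
    ring
  have := hF.le_add_lineDeriv_of_isMinOn_add hmin (Set.mem_univ _) (Set.mem_univ u) hG
  simp only [bregmanDist]
  linarith

theorem bregmanDist_succ_add_le (h : IsBregmanIteration F A S d N f p) (hk : k < N)
    (u : Fin n → ℝ) :
    bregmanDist F (p (k + 1)) u (f (k + 1)) + 1 / 2 * enormSq (S *ᵥ (d - A *ᵥ f (k + 1)))
      ≤ bregmanDist F (p k) u (f (k + 1)) + 1 / 2 * enormSq (S *ᵥ (d - A *ᵥ u)) := by
  have hr : S *ᵥ (A *ᵥ (u - f (k + 1)))
      = S *ᵥ (d - A *ᵥ f (k + 1)) - S *ᵥ (d - A *ᵥ u) := by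
    simp only [mulVec_sub]
    abel
  have hp := h.p_succ_dotProduct hk (u - f (k + 1))
  rw [hr, dotProduct_sub (S *ᵥ _), ← enormSq_eq_dotProduct] at hp
  have := dotProduct_le_half_enormSq_add (S *ᵥ (d - A *ᵥ f (k + 1))) (S *ᵥ (d - A *ᵥ u))
  simp only [bregmanDist]
  linarith

theorem enormSq_residual_succ_succ_le (h : IsBregmanIteration F A S d N f p)
    (hF : ConvexOn ℝ Set.univ F) (hk : k + 1 < N) :
    enormSq (S *ᵥ (d - A *ᵥ f (k + 2))) ≤ enormSq (S *ᵥ (d - A *ᵥ f (k + 1))) := by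
  have hmin := isMinOn_univ_iff.1 (h.isMinOn (k + 1) hk) (f (k + 1))
  have := h.bregmanDist_nonneg hF (Nat.lt_of_succ_lt hk) (f (k + 2))
  simp only [bregmanDist_self] at hmin
  linarith

theorem enormSq_residual_le_of_le (h : IsBregmanIteration F A S d N f p)
    (hF : ConvexOn ℝ Set.univ F) {j : ℕ} (hjk : j ≤ k) (hk : k < N) :
    enormSq (S *ᵥ (d - A *ᵥ f (k + 1))) ≤ enormSq (S *ᵥ (d - A *ᵥ f (j + 1))) := by
  induction k, hjk using Nat.le_induction with
  | base => rfl
  | succ k hjk ih => exact (h.enormSq_residual_succ_succ_le hF hk).trans (ih (by omega))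

theorem bregmanDist_add_sum_le (h : IsBregmanIteration F A S d N f p)
    (hF : ConvexOn ℝ Set.univ F) (hF0 : ∀ u, 0 ≤ F u) (u : Fin n → ℝ) (hk : k < N) :
    bregmanDist F (p (k + 1)) u (f (k + 1))
        + 1 / 2 * ∑ j ∈ range (k + 1), enormSq (S *ᵥ (d - A *ᵥ f (j + 1)))
      ≤ F u + (k + 1) / 2 * enormSq (S *ᵥ (d - A *ᵥ u)) := by
  induction k with
  | zero =>
    have := h.bregmanDist_succ_add_le hk u
    simp only [bregmanDist, h.p_zero, zero_dotProduct] at this ⊢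
    simp only [zero_add, range_one, sum_singleton, Nat.cast_zero]
    linarith [hF0 (f 1)]
  | succ k ih =>
    have hstep := h.bregmanDist_succ_add_le hk u
    have hB := h.bregmanDist_nonneg hF (Nat.lt_of_succ_lt hk) (f (k + 1 + 1))
    rw [← bregmanDist_sub_bregmanDist F (p (k + 1)) u (f (k + 1))] at hstep
    rw [sum_range_succ]
    push_cast
    linarith [ih (Nat.lt_of_succ_lt hk)]

theorem mul_enormSq_residual_le (h : IsBregmanIteration F A S d (N + 1) f p)
    (hF : ConvexOn ℝ Set.univ F) (hF0 : ∀ u, 0 ≤ F u) (u : Fin n → ℝ) :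
    (N + 1) * enormSq (S *ᵥ (d - A *ᵥ f (N + 1)))
      ≤ 2 * F u + (N + 1) * enormSq (S *ᵥ (d - A *ᵥ u)) := by
  have hsum := h.bregmanDist_add_sum_le hF hF0 u N.lt_succ_self
  have hD := h.bregmanDist_nonneg hF N.lt_succ_self u
  have hmono := card_nsmul_le_sum (range (N + 1)) _ _ fun j hj =>
    h.enormSq_residual_le_of_le hF (Nat.lt_succ_iff.1 (mem_range.1 hj)) N.lt_succ_self
  rw [card_range, nsmul_eq_mul] at hmono
  push_cast at hmono
  linarith

end IsBregmanIteration

end Bregman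

/-- error estimate for the Bregman iterative algorithm with zero initial
subgradient: for convex `F ≥ 0` and any `f*`,
`‖S(d − Af^N)‖₂² ≤ (2/N)·F(f*) + ‖S(Af* − d)‖₂²`. -/
theorem stmt13 (m n : ℕ) (F : (Fin n → ℝ) → ℝ) (hF : ConvexOn ℝ Set.univ F)
    (hFpos : ∀ f, 0 ≤ F f)
    (A : Matrix (Fin m) (Fin n) ℝ) (S : Matrix (Fin m) (Fin m) ℝ) (d : Fin m → ℝ)
    (N : ℕ) (hN : 1 ≤ N) (f p : ℕ → (Fin n → ℝ)) (hp0 : p 0 = 0)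
    (hmin : ∀ k : ℕ, 1 ≤ k → k ≤ N → ∀ u : Fin n → ℝ,
      F (f k) - F (f (k - 1)) - dotProduct (p (k - 1)) (f k - f (k - 1))
          + (1 / 2) * enormSq (S.mulVec (d - A.mulVec (f k)))
        ≤ F u - F (f (k - 1)) - dotProduct (p (k - 1)) (u - f (k - 1))
          + (1 / 2) * enormSq (S.mulVec (d - A.mulVec u)))
    (hp : ∀ k : ℕ, 1 ≤ k → k ≤ N →
      p k = p (k - 1) - (Aᵀ * Sᵀ * S).mulVec (A.mulVec (f k) - d)) :
    ∀ fstar : Fin n → ℝ,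
      enormSq (S.mulVec (d - A.mulVec (f N)))
        ≤ (2 / (N : ℝ)) * F fstar
          + enormSq (S.mulVec (A.mulVec fstar - d)) := by
  intro fstar
  obtain ⟨N, rfl⟩ : ∃ K, N = K + 1 := ⟨N - 1, by omega⟩
  have hiter : IsBregmanIteration F A S d (N + 1) f p :=
    { p_zero := hp0
      isMinOn := fun k hk => isMinOn_univ_iff.2 fun u => by
        simpa only [bregmanDist, Nat.add_sub_cancel] using hmin (k + 1) k.succ_pos hk u
      p_succ := fun k hk => by
        simpa only [Nat.add_sub_cancel] using hp (k + 1) k.succ_pos hk }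
  have hbound := hiter.mul_enormSq_residual_le hF hFpos fstar
  rw [← neg_sub d, mulVec_neg, enormSq_neg, div_mul_eq_mul_div, div_add' _ _ _ (by positivity),
    le_div_iff₀ (by positivity)]
  push_cast
  linarith
end
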